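/- The function Ψ, defined by Ψ(x) = (1/x)·ln((e^x − 1)/x) for x ≠ 0 and Ψ(0) = 1/2, is strictly increasing on ℝ. -/

import Mathlib

/-!
Extend `Φ(x) = log ((eˣ - 1) / x)` by `Φ 0 = 0`; it is `log` of the difference quotient of `exp`
at `0`, hence continuous. For `x > 0`, `Φ'' > 0` amounts to `x² eˣ < (eˣ - 1)²`, i.e. to
`x < 2 sinh (x / 2)`, so `Φ` is strictly convex on `[0, ∞)` and its secant slope `Ψ = Φ(x) / x`
from `0` increases there; the same inequality gives `Ψ > 1/2 = Ψ 0` for `x > 0`.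
Finally `Φ(-x) = Φ(x) - x`, so `Ψ x + Ψ (-x) = 1` and `Ψ - 1/2` is odd.
-/

noncomputable def Psi (x : ℝ) : ℝ :=
  if x = 0 then 1 / 2 else (1 / x) * Real.log ((Real.exp x - 1) / x)

open Real Set

-- At `x = 0` the junk value `0 / 0 = 0` gives `Phi 0 = log 0 = 0`, the continuous extension.
noncomputable def Phi (x : ℝ) : ℝ := log ((exp x - 1) / x)

@[simp] lemma Phi_zero : Phi 0 = 0 := by simp [Phi]

lemma Psi_of_ne_zero {x : ℝ} (hx : x ≠ 0) : Psi x = Phi x / x := by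
  rw [Psi, if_neg hx, Phi, one_div_mul_eq_div]

lemma exp_sub_one_ne_zero {x : ℝ} (hx : x ≠ 0) : exp x - 1 ≠ 0 :=
  sub_ne_zero.2 fun h => hx (exp_eq_one_iff x |>.1 h)

lemma Phi_eq_log_dslope_exp : Phi = fun x => log (dslope exp 0 x) := by
  ext x
  rcases eq_or_ne x 0 with rfl | hx
  · simp
  · simp [Phi, dslope_of_ne _ hx, slope_def_field]

lemma dslope_exp_zero_ne_zero (x : ℝ) : dslope exp 0 x ≠ 0 := by
  rcases eq_or_ne x 0 with rfl | hx
  · simp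
  · rw [dslope_of_ne _ hx, slope_def_field, exp_zero, sub_zero]
    exact div_ne_zero (exp_sub_one_ne_zero hx) hx

lemma continuous_Phi : Continuous Phi := by
  rw [Phi_eq_log_dslope_exp, continuous_iff_continuousAt]
  intro x
  refine ContinuousAt.log ?_ (dslope_exp_zero_ne_zero x)
  rcases eq_or_ne x 0 with rfl | hx
  · exact continuousAt_dslope_same.2 differentiableAt_exp
  · exact (continuousAt_dslope_of_ne hx).2 continuous_exp.continuousAt

lemma mul_exp_half_lt_exp_sub_one {x : ℝ} (hx : 0 < x) : x * exp (x / 2) < exp x - 1 := by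
  have hsinh : exp x - 1 = 2 * sinh (x / 2) * exp (x / 2) := by
    rw [sinh_eq, exp_neg]
    field_simp
    rw [sq, ← exp_add, add_halves]
  rw [hsinh]
  have := self_lt_sinh_iff.2 (half_pos hx)
  nlinarith [exp_pos (x / 2)]

lemma sq_mul_exp_lt_sq_exp_sub_one {x : ℝ} (hx : 0 < x) : x ^ 2 * exp x < (exp x - 1) ^ 2 := by
  have h := mul_exp_half_lt_exp_sub_one hx
  calc x ^ 2 * exp x = (x * exp (x / 2)) ^ 2 := by rw [mul_pow, sq (exp _), ← exp_add, add_halves]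
    _ < (exp x - 1) ^ 2 := pow_lt_pow_left₀ h (by positivity) two_ne_zero

lemma hasDerivAt_Phi {x : ℝ} (hx : x ≠ 0) :
    HasDerivAt Phi (exp x / (exp x - 1) - x⁻¹) x := by
  have hE := exp_sub_one_ne_zero hx
  have h : HasDerivAt (fun y => log ((exp y - 1) / y))
      ((exp x * x - (exp x - 1) * 1) / x ^ 2 / ((exp x - 1) / x)) x :=
    (((hasDerivAt_exp x).sub_const 1).div (hasDerivAt_id' x) hx).log (div_ne_zero hE hx)
  exact h.congr_deriv (by field_simp)

lemma hasDerivAt_exp_div_exp_sub_one_sub_inv {x : ℝ} (hx : x ≠ 0) :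
    HasDerivAt (fun y => exp y / (exp y - 1) - y⁻¹)
      ((x ^ 2)⁻¹ - exp x / (exp x - 1) ^ 2) x := by
  have hE := exp_sub_one_ne_zero hx
  have h : HasDerivAt (fun y => exp y / (exp y - 1) - y⁻¹)
      ((exp x * (exp x - 1) - exp x * exp x) / (exp x - 1) ^ 2 - -(x ^ 2)⁻¹) x :=
    ((hasDerivAt_exp x).div ((hasDerivAt_exp x).sub_const 1) hE).sub (hasDerivAt_inv hx)
  refine h.congr_deriv ?_
  field_simp
  ring

lemma strictMonoOn_deriv_Phi : StrictMonoOn (deriv Phi) (Ioi 0) := by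
  have hmono : StrictMonoOn (fun y => exp y / (exp y - 1) - y⁻¹) (Ioi 0) := by
    refine strictMonoOn_of_deriv_pos (convex_Ioi 0) (fun x hx =>
      (hasDerivAt_exp_div_exp_sub_one_sub_inv hx.ne').continuousAt.continuousWithinAt) ?_
    intro x hx
    rw [interior_Ioi] at hx
    have hE : 0 < exp x - 1 := sub_pos.2 (one_lt_exp_iff.2 hx)
    rw [(hasDerivAt_exp_div_exp_sub_one_sub_inv hx.ne').deriv, sub_pos,
      div_lt_iff₀ (pow_pos hE 2), inv_mul_eq_div, lt_div_iff₀ (pow_pos hx 2), mul_comm]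
    exact sq_mul_exp_lt_sq_exp_sub_one hx
  exact hmono.congr fun x hx => ((hasDerivAt_Phi hx.ne').deriv).symm

lemma strictConvexOn_Phi : StrictConvexOn ℝ (Ici 0) Phi := by
  refine StrictMonoOn.strictConvexOn_of_deriv (convex_Ici 0) continuous_Phi.continuousOn ?_
  rw [interior_Ici]
  exact strictMonoOn_deriv_Phi

lemma half_lt_Psi {x : ℝ} (hx : 0 < x) : 1 / 2 < Psi x := by
  have hlt : exp (x / 2) < (exp x - 1) / x := by
    rw [lt_div_iff₀ hx, mul_comm]
    exact mul_exp_half_lt_exp_sub_one hx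
  have hlog : x / 2 < Phi x := by
    rw [← log_exp (x / 2)]
    exact log_lt_log (exp_pos _) hlt
  rw [Psi_of_ne_zero hx.ne', lt_div_iff₀ hx]
  linarith

lemma Phi_neg (x : ℝ) : Phi (-x) = Phi x - x := by
  rcases eq_or_ne x 0 with rfl | hx
  · simp
  have hE := exp_sub_one_ne_zero hx
  have hquot : (exp (-x) - 1) / -x = exp (-x) * ((exp x - 1) / x) := by
    rw [exp_neg]; field_simp; ring
  rw [Phi, hquot, log_mul (exp_ne_zero _) (div_ne_zero hE hx), log_exp, Phi]
  ring

lemma Psi_add_Psi_neg (x : ℝ) : Psi x + Psi (-x) = 1 := by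
  rcases eq_or_ne x 0 with rfl | hx
  · norm_num [Psi]
  rw [Psi_of_ne_zero hx, Psi_of_ne_zero (neg_ne_zero.2 hx), Phi_neg]
  field_simp
  ring

lemma strictMonoOn_Psi_Ici : StrictMonoOn Psi (Ici 0) := by
  intro x hx y hy hxy
  rcases (mem_Ici.1 hx).eq_or_lt with rfl | hx
  · simpa [Psi] using half_lt_Psi hxy
  have h := strictConvexOn_Phi.secant_strict_mono (a := 0) self_mem_Ici hx.le (hx.trans hxy).le
    hx.ne' (hx.trans hxy).ne' hxy
  simpa only [Phi_zero, sub_zero, ← Psi_of_ne_zero hx.ne', ← Psi_of_ne_zero (hx.trans hxy).ne']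
    using h

theorem Psi_strictMono : StrictMono Psi := by
  have hodd : StrictMono fun x => Psi x - 1 / 2 :=
    strictMono_of_odd_strictMonoOn_nonneg (fun x => by linarith [Psi_add_Psi_neg x])
      fun x hx y hy hxy => sub_lt_sub_right (strictMonoOn_Psi_Ici hx hy hxy) _
  exact fun x y hxy => sub_lt_sub_iff_right _ |>.1 (hodd hxy)
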